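/- Let m, n, l be natural numbers with n ≥ max(m, l). Then the set of pairs (A, B), where A is an m × n complex matrix and B is an n × l complex matrix, such that rank(A·B) ≠ min(m, l), has Lebesgue measure zero (with respect to the Lebesgue/volume measure on the product of the two matrix spaces, each identified with a finite-dimensional complex coordinate space). -/

import Mathlib

open MeasureTheory

/-- The Lebesgue (volume) measure on the space of `m × n` complex matrices,
identified with the coordinate space `ℂ^{m·n}` (i.e. the pi-type
`Fin m → Fin n → ℂ`). -/
noncomputable instance matrixMeasureSpace (m n : ℕ) :
    MeasureSpace (Matrix (Fin m) (Fin n) ℂ) :=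
  inferInstanceAs (MeasureSpace (Fin m → Fin n → ℂ))

/-! If `rank (A * B) < k := min m l`, the leading `k × k` minor of `A * B` vanishes. That minor is a
polynomial in the entries of `A` and `B`, and it is not the zero polynomial: it equals `1` when `A`
and `B` are truncated identity matrices. The zero set of a nonzero polynomial on `ℂ^N` is null, by
induction on `N` and Fubini: off the null zero set of its leading coefficient in the last `N`
variables, each slice in the first variable is the finite root set of a nonzero polynomial. -/

theorem measurePreserving_uncurry {ι κ α : Type*} [Fintype ι] [Fintype κ] [MeasurableSpace α]
    (μ : ι → κ → Measure α) [∀ i j, SigmaFinite (μ i j)] :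
    MeasurePreserving (Function.uncurry : (ι → κ → α) → ι × κ → α)
      (Measure.pi fun i => Measure.pi (μ i)) (Measure.pi fun p => μ p.1 p.2) := by
  have hmeas : Measurable (Function.uncurry : (ι → κ → α) → ι × κ → α) :=
    (MeasurableEquiv.curry ι κ α).symm.measurable
  refine ⟨hmeas, (Measure.pi_eq fun s hs => ?_).symm⟩
  have hbox : Function.uncurry ⁻¹' Set.univ.pi s =
      Set.univ.pi fun i => Set.univ.pi fun j => s (i, j) := by
    ext; simp
  rw [Measure.map_apply hmeas (.univ_pi hs), hbox, Measure.pi_pi, Fintype.prod_prod_type]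
  simp_rw [Measure.pi_pi]

theorem measure_pi_eq_zero_of_ae_fin_cons {α : Type*} [MeasurableSpace α] (μ : Measure α)
    [SigmaFinite μ] {N : ℕ} {s : Set (Fin (N + 1) → α)} (hs : MeasurableSet s)
    (h : ∀ᵐ y ∂(Measure.pi fun _ => μ), μ {a | Fin.cons a y ∈ s} = 0) :
    Measure.pi (fun _ => μ) s = 0 := by
  let e : (Fin (N + 1) → α) → (Fin N → α) × α :=
    Prod.swap ∘ MeasurableEquiv.piFinSuccAbove (fun _ => α) 0
  have he : MeasurePreserving e (Measure.pi fun _ => μ) ((Measure.pi fun _ => μ).prod μ) :=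
    (Measure.measurePreserving_swap (μ := μ) (ν := Measure.pi fun _ : Fin N => μ)).comp
      (measurePreserving_piFinSuccAbove (fun _ => μ) 0)
  let T : Set ((Fin N → α) × α) := {p | Fin.cons p.2 p.1 ∈ s}
  have hT : MeasurableSet T := by
    convert ((MeasurableEquiv.piFinSuccAbove (fun _ => α) 0).symm.measurable.comp
      measurable_swap) hs using 1
    ext p
    simp [T, Fin.consEquiv]
  have hsT : s = e ⁻¹' T := by ext x; simp [e, T]
  rw [hsT, he.measure_preimage hT.nullMeasurableSet, Measure.measure_prod_null hT]
  exact h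

namespace MvPolynomial

variable {K : Type*} [CommRing K] [MeasurableSpace K] [MeasurableAdd₂ K] [MeasurableMul₂ K]

theorem measurable_eval {ι : Type*} (P : MvPolynomial ι K) :
    Measurable fun x : ι → K => eval x P := by
  induction P using MvPolynomial.induction_on with
  | C a => simp
  | add p q hp hq => simp only [map_add]; exact hp.add hq
  | mul_X p i hp => simp only [map_mul, eval_X]; exact hp.mul (measurable_pi_apply i)

variable [MeasurableSingletonClass K]

theorem measurableSet_setOf_eval_eq_zero {ι : Type*} (P : MvPolynomial ι K) :
    MeasurableSet {x : ι → K | eval x P = 0} :=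
  measurable_eval P (measurableSet_singleton 0)

variable [IsDomain K] (μ : Measure K) [SigmaFinite μ] [NullSingletonClass μ]

theorem measure_pi_setOf_eval_eq_zero_fin : ∀ {N : ℕ} {P : MvPolynomial (Fin N) K}, P ≠ 0 →
    Measure.pi (fun _ => μ) {x : Fin N → K | eval x P = 0} = 0
  | 0, P, hP => by
    have hempty : {x : Fin 0 → K | eval x P = 0} = ∅ := by
      ext x
      rw [eq_C_of_isEmpty P] at hP ⊢
      simpa using hP
    rw [hempty, measure_empty]
  | N + 1, P, hP => by
    set q := finSuccEquiv K N P
    have hq : q ≠ 0 := (map_ne_zero_iff _ (finSuccEquiv K N).injective).mpr hP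
    have hlc := measure_pi_setOf_eval_eq_zero_fin (Polynomial.leadingCoeff_ne_zero.mpr hq)
    refine measure_pi_eq_zero_of_ae_fin_cons μ (measurableSet_setOf_eval_eq_zero P) ?_
    filter_upwards [measure_eq_zero_iff_ae_notMem.mp hlc] with y hy
    have hqy : q.map (eval y) ≠ 0 :=
      ne_of_apply_ne (Polynomial.coeff · q.natDegree) (by simpa [Polynomial.coeff_map] using hy)
    simp only [eval_eq_eval_mv_eval']
    exact (Polynomial.finite_setOfPred_isRoot hqy).measure_zero μ

theorem measure_pi_setOf_eval_eq_zero {ι : Type*} [Fintype ι] {P : MvPolynomial ι K}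
    (hP : P ≠ 0) : Measure.pi (fun _ => μ) {x : ι → K | eval x P = 0} = 0 := by
  let e := Fintype.equivFin ι
  have he := measurePreserving_piCongrLeft (fun _ : ι => μ) e.symm
  have hQ : rename e P ≠ 0 := (map_ne_zero_iff _ (rename_injective e e.injective)).mpr hP
  rw [← he.measure_preimage (measurableSet_setOf_eval_eq_zero P).nullMeasurableSet]
  convert measure_pi_setOf_eval_eq_zero_fin μ hQ using 2
  ext y
  have hy : MeasurableEquiv.piCongrLeft (fun _ => K) e.symm y = y ∘ e := by
    ext i
    simpa using MeasurableEquiv.piCongrLeft_apply_apply e.symm (β := fun _ => K) y (e i)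
  simp [hy, eval_rename]

end MvPolynomial

section Matrix

variable {K m n p ι : Type*}

theorem Matrix.det_submatrix_eq_zero_of_rank_lt [Field K] [Fintype n] [Fintype ι]
    [DecidableEq ι] (M : Matrix m n K) (row : ι → m) (col : ι → n)
    (h : M.rank < Fintype.card ι) : (M.submatrix row col).det = 0 := by
  by_contra hdet
  have hunit := (Matrix.isUnit_iff_isUnit_det _).mpr (isUnit_iff_ne_zero.mpr hdet)
  have := M.rank_submatrix_le row col
  rw [Matrix.rank_of_isUnit _ hunit] at this
  omega

def pairEntries (q : (m → n → K) × (n → p → K)) : m × n ⊕ n × p → K :=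
  Sum.elim (Function.uncurry q.1) (Function.uncurry q.2)

theorem measurePreserving_pairEntries [Fintype m] [Fintype n] [Fintype p] [MeasurableSpace K]
    (μ : Measure K) [SigmaFinite μ] :
    MeasurePreserving (pairEntries (m := m) (n := n) (p := p))
      ((Measure.pi fun _ => Measure.pi fun _ => μ).prod
        (Measure.pi fun _ => Measure.pi fun _ => μ))
      (Measure.pi fun _ => μ) :=
  (measurePreserving_sumPiEquivProdPi_symm (fun _ => μ)).comp
    ((measurePreserving_uncurry fun _ _ => μ).prod (measurePreserving_uncurry fun _ _ => μ))

variable (K n) in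
noncomputable def productMinor [CommRing K] [Fintype n] [Fintype ι] [DecidableEq ι]
    (row : ι → m) (col : ι → p) : MvPolynomial (m × n ⊕ n × p) K :=
  let A : Matrix m n (MvPolynomial (m × n ⊕ n × p) K) := .of fun i t => .X (.inl (i, t))
  let B : Matrix n p (MvPolynomial (m × n ⊕ n × p) K) := .of fun t j => .X (.inr (t, j))
  ((A * B).submatrix row col).det

theorem eval_productMinor [CommRing K] [Fintype n] [Fintype ι] [DecidableEq ι]
    (row : ι → m) (col : ι → p) (A : Matrix m n K) (B : Matrix n p K) :
    MvPolynomial.eval (pairEntries (A, B)) (productMinor K n row col) =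
      ((A * B).submatrix row col).det := by
  rw [productMinor, RingHom.map_det, RingHom.mapMatrix_apply, ← Matrix.submatrix_map,
    Matrix.map_mul]
  congr <;> ext <;> exact MvPolynomial.eval_X _

theorem productMinor_castLE_ne_zero [CommRing K] [Nontrivial K] {k m n p : ℕ} (hkm : k ≤ m)
    (hkp : k ≤ p) (hmn : m ≤ n) (hpn : p ≤ n) :
    productMinor K (Fin n) (Fin.castLE hkm) (Fin.castLE hkp) ≠ 0 := by
  intro h0
  let A : Matrix (Fin m) (Fin n) K := (1 : Matrix (Fin n) (Fin n) K).submatrix (Fin.castLE hmn) id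
  let B : Matrix (Fin n) (Fin p) K := (1 : Matrix (Fin n) (Fin n) K).submatrix id (Fin.castLE hpn)
  have hAB : (A * B).submatrix (Fin.castLE hkm) (Fin.castLE hkp) = 1 := by
    rw [← Matrix.submatrix_mul _ _ _ _ _ Function.bijective_id, Matrix.mul_one,
      Matrix.submatrix_submatrix]
    exact Matrix.submatrix_one _ ((Fin.castLE_injective hmn).comp (Fin.castLE_injective hkm))
  simpa [eval_productMinor, hAB] using congrArg (MvPolynomial.eval (pairEntries (A, B))) h0

end Matrix

/-- Measure-theoretic content of Lemma 1: for `n ≥ max m l`, the set of pairs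
`(A, B)` of complex matrices with `rank (A·B) ≠ min m l` has Lebesgue measure
zero in the product of the matrix spaces. -/
theorem stmt_2 (m n l : ℕ) (h : n ≥ max m l) :
    volume {p : Matrix (Fin m) (Fin n) ℂ × Matrix (Fin n) (Fin l) ℂ |
      (p.1 * p.2).rank ≠ min m l} = 0 := by
  obtain ⟨hmn, hln⟩ := max_le_iff.mp h
  set P := productMinor ℂ (Fin n) (Fin.castLE (min_le_left m l)) (Fin.castLE (min_le_right m l))
  have hsub : {p : Matrix (Fin m) (Fin n) ℂ × Matrix (Fin n) (Fin l) ℂ |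
      (p.1 * p.2).rank ≠ min m l} ⊆ pairEntries ⁻¹' {x | MvPolynomial.eval x P = 0} := by
    rintro ⟨A, B⟩ hAB
    have hlt : (A * B).rank < min m l :=
      lt_of_le_of_ne (le_min (Matrix.rank_le_height _) (Matrix.rank_le_width _)) hAB
    change MvPolynomial.eval (pairEntries (A, B)) P = 0
    rw [eval_productMinor]
    exact Matrix.det_submatrix_eq_zero_of_rank_lt _ _ _ (by simpa only [Fintype.card_fin])
  refine measure_mono_null hsub ?_
  exact ((measurePreserving_pairEntries volume).measure_preimage
    (MvPolynomial.measurableSet_setOf_eval_eq_zero P).nullMeasurableSet).trans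
    (MvPolynomial.measure_pi_setOf_eval_eq_zero volume (productMinor_castLE_ne_zero _ _ hmn hln))
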